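/- Let d ≥ 2 and let e₁, e₂, e₃ be integers with 2 ≤ e₁ ≤ e₂ ≤ e₃ ≤ d, e₁ + e₂ + e₃ = 2d + 1, and e₂ < d. Let g₁, g₂, g₃ ∈ S_d be the cycles g₁ = (d, d−1, …, e₃, 1, 2, …, d−e₂), g₂ = (d−e₂+1, …, d), g₃ = (e₃, e₃−1, …, 1). Then the iterated commutator [g₁, [g₂, g₃]] is a nontrivial permutation; in particular it does not fix the point e₃. -/

import Mathlib

/-!
A commutator `⁅a, b⁆ = a b a⁻¹ b⁻¹` fixes `x` iff `a⁻¹` and `b⁻¹` commute at `x`. For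
`a = g₁`, `b = ⁅g₂, g₃⁆` and `x = e₃`, both `a⁻¹` and `b⁻¹` send `e₃` to the same point `y`
(`e₃ + 1` if `e₃ < d`, and `d - e₂` if `e₃ = d`), but `a⁻¹ y ≠ b⁻¹ y`. Each of these facts is a
short chase through the three cycles, which works because `d - e₂ + 2 ≤ e₃`, i.e. the cycle
`g₂ = (d - e₂ + 1, …, d)` contains both `e₃ - 1` and `e₃`.
-/

open scoped commutatorElement
open Equiv List

namespace List

variable {α : Type*} {f : ℕ → α} {n i : ℕ}

theorem map_range_append_map_range (f g : ℕ → α) (m n : ℕ) :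
    (range m).map f ++ (range n).map g =
      (range (m + n)).map fun j => if j < m then f j else g (j - m) := by
  rw [range_add, map_append, map_map]
  congr 1
  · exact map_congr_left fun j hj => by simp_all
  · exact map_congr_left fun j _ => by simp

variable [DecidableEq α]

theorem formPerm_map_range_apply (hf : Set.InjOn f (Set.Iio n)) (hi : i < n) :
    ((range n).map f).formPerm (f i) = f ((i + 1) % n) := by
  have hnd : ((range n).map f).Nodup :=
    nodup_range.map_on fun x hx y hy h => hf (by simpa using hx) (by simpa using hy) h
  have hi' : i < ((range n).map f).length := by simpa using hi
  simpa using formPerm_apply_getElem _ hnd i hi'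

theorem formPerm_map_range_apply_of_add_one_lt (hf : Set.InjOn f (Set.Iio n))
    (hi : i + 1 < n) : ((range n).map f).formPerm (f i) = f (i + 1) := by
  rw [formPerm_map_range_apply (i := i) hf (by omega), Nat.mod_eq_of_lt hi]

theorem formPerm_map_range_apply_of_add_one_eq (hf : Set.InjOn f (Set.Iio n))
    (hi : i + 1 = n) : ((range n).map f).formPerm (f i) = f 0 := by
  rw [formPerm_map_range_apply (i := i) hf (by omega), hi, Nat.mod_self]

theorem formPerm_map_range_apply_of_forall_ne {x : α} (hx : ∀ i < n, f i ≠ x) :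
    ((range n).map f).formPerm x = x :=
  formPerm_apply_of_notMem (by simpa [eq_comm] using hx)

end List

def ascCycle (s n : ℕ) : Perm ℕ := ((range n).map (s + ·)).formPerm

def descCycle (n : ℕ) : Perm ℕ := ((range n).map (n - ·)).formPerm

/-- The cycle `(m, m - 1, …, l, 1, 2, …, r)`. -/
def descAscCycle (m l r : ℕ) : Perm ℕ :=
  ((range (m - l + 1)).map (m - ·) ++ (range r).map (· + 1)).formPerm

section Cycles

variable {s n m l r k j : ℕ}

theorem ascCycle_apply_of_add_one_eq (hk : s ≤ k) (hj : k + 1 = j) (hjn : j < s + n) :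
    ascCycle s n k = j := by
  have := formPerm_map_range_apply_of_add_one_lt (n := n) (i := k - s)
    (add_right_injective s).injOn (by omega)
  rwa [show s + (k - s) = k by omega, show s + (k - s + 1) = j by omega] at this

theorem ascCycle_apply_last (hn : 0 < n) (hk : k + 1 = s + n) : ascCycle s n k = s := by
  have := formPerm_map_range_apply_of_add_one_eq (n := n) (i := k - s)
    (add_right_injective s).injOn (by omega)
  rwa [show s + (k - s) = k by omega, add_zero] at this

theorem ascCycle_apply_of_lt (hk : k < s) : ascCycle s n k = k :=
  formPerm_map_range_apply_of_forall_ne fun _ _ => by omega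

theorem injOn_sub_Iio (n : ℕ) : Set.InjOn (n - ·) (Set.Iio n) :=
  fun _ hi _ hj h => by simp only [Set.mem_Iio] at hi hj h; omega

theorem descCycle_apply_of_add_one_eq (hk : 0 < k) (hj : k + 1 = j) (hjn : j ≤ n) :
    descCycle n j = k := by
  have := formPerm_map_range_apply_of_add_one_lt (i := n - j) (injOn_sub_Iio n) (by omega)
  rwa [show n - (n - j) = j by omega, show n - (n - j + 1) = k by omega] at this

theorem descCycle_apply_one (hn : 0 < n) : descCycle n 1 = n := by
  have := formPerm_map_range_apply_of_add_one_eq (i := n - 1) (injOn_sub_Iio n) (by omega)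
  rwa [show n - (n - 1) = 1 by omega, Nat.sub_zero] at this

theorem descCycle_apply_of_lt (hk : n < k) : descCycle n k = k :=
  formPerm_map_range_apply_of_forall_ne fun _ _ => by omega

theorem injOn_descAsc (hrl : r < l) (hlm : l ≤ m) :
    Set.InjOn (fun j => if j < m - l + 1 then m - j else j - (m - l + 1) + 1)
      (Set.Iio (m - l + 1 + r)) := by
  intro i hi j hj h
  simp only [Set.mem_Iio] at hi hj h
  split_ifs at h <;> omega

theorem descAscCycle_apply_of_add_one_eq (hrl : r < l) (hlm : l ≤ m) (hk : l ≤ k)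
    (hj : k + 1 = j) (hjm : j ≤ m) : descAscCycle m l r j = k := by
  rw [descAscCycle, map_range_append_map_range]
  convert formPerm_map_range_apply_of_add_one_lt (i := m - j)
    (injOn_descAsc hrl hlm) (by omega) using 2 <;> split_ifs <;> omega

theorem descAscCycle_apply_left (hrl : r < l) (hlm : l ≤ m) (hr : 0 < r) :
    descAscCycle m l r l = 1 := by
  rw [descAscCycle, map_range_append_map_range]
  convert formPerm_map_range_apply_of_add_one_lt (i := m - l)
    (injOn_descAsc hrl hlm) (by omega) using 2 <;> split_ifs <;> omega

theorem descAscCycle_apply_right (hrl : r < l) (hlm : l ≤ m) (hr : 0 < r) :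
    descAscCycle m l r r = m := by
  rw [descAscCycle, map_range_append_map_range]
  convert formPerm_map_range_apply_of_add_one_eq (i := m - l + r)
    (injOn_descAsc hrl hlm) (by omega) using 2 <;> split_ifs <;> omega

theorem descAscCycle_apply_of_lt_of_lt (hlm : l ≤ m) (h₁ : r < k) (h₂ : k < l) :
    descAscCycle m l r k = k := by
  refine formPerm_apply_of_notMem ?_
  simp only [mem_append, mem_map, mem_range, not_or, not_exists, not_and]
  constructor <;> intro i _ <;> omega

end Cycles

namespace Equiv.Perm

variable {α : Type*} {a b : Perm α} {x y z u v w : α}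

theorem commutatorElement_apply_of_eq (hu : b u = x) (hv : a v = u) (hw : b v = w)
    (hz : a w = z) : ⁅a, b⁆ x = z := by
  rw [commutatorElement_def, mul_apply, mul_apply, mul_apply,
    inv_eq_iff_eq.2 hu.symm, inv_eq_iff_eq.2 hv.symm, hw, hz]

theorem commutatorElement_apply_ne_self (hy : a y = x) (hx : b⁻¹ x = y) (hw : b⁻¹ y = w)
    (haw : a w ≠ y) : ⁅a, b⁆ x ≠ x := by
  intro h
  rw [commutatorElement_def, mul_apply, mul_apply, mul_apply, hx] at h
  have hby : b (a⁻¹ y) = y := a.injective (h.trans hy.symm)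
  exact haw (inv_eq_iff_eq.1 ((eq_inv_iff_eq.2 hby).trans hw)).symm

end Equiv.Perm

open Equiv.Perm

section Commutator

variable {d e₂ e₃ : ℕ}

theorem commutator_cycles_apply_ne_of_lt (h2d : e₂ < d) (hgap : d - e₂ + 2 ≤ e₃)
    (hlt : e₃ < d) :
    ⁅descAscCycle d e₃ (d - e₂), ⁅ascCycle (d - e₂ + 1) e₂, descCycle e₃⁆⁆ e₃ ≠ e₃ := by
  have hrl : d - e₂ < e₃ := by omega
  refine commutatorElement_apply_ne_self (y := e₃ + 1) (w := e₃)
    (descAscCycle_apply_of_add_one_eq hrl hlt.le le_rfl rfl hlt) ?_ ?_ ?_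
  · rw [commutatorElement_inv]
    exact commutatorElement_apply_of_eq (u := e₃ - 1) (v := e₃)
      (ascCycle_apply_of_add_one_eq (by omega) (by omega) (by omega))
      (descCycle_apply_of_add_one_eq (by omega) (by omega) le_rfl)
      (ascCycle_apply_of_add_one_eq (by omega) rfl (by omega))
      (descCycle_apply_of_lt (by omega))
  · rw [commutatorElement_inv]
    exact commutatorElement_apply_of_eq (u := e₃) (v := 1)
      (ascCycle_apply_of_add_one_eq (by omega) rfl (by omega))
      (descCycle_apply_one (by omega))
      (ascCycle_apply_of_lt (by omega))
      (descCycle_apply_one (by omega))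
  · rw [descAscCycle_apply_left hrl hlt.le (by omega)]
    omega

theorem commutator_cycles_apply_ne_of_eq (h2d : e₂ < d) (hgap : d - e₂ + 2 ≤ d) :
    ⁅descAscCycle d d (d - e₂), ⁅ascCycle (d - e₂ + 1) e₂, descCycle d⁆⁆ d ≠ d := by
  have hrl : d - e₂ < d := by omega
  refine commutatorElement_apply_ne_self (y := d - e₂) (w := d - e₂ + 1)
    (descAscCycle_apply_right hrl le_rfl (by omega)) ?_ ?_ ?_
  · rw [commutatorElement_inv]
    exact commutatorElement_apply_of_eq (u := d - 1) (v := d)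
      (ascCycle_apply_of_add_one_eq (by omega) (by omega) (by omega))
      (descCycle_apply_of_add_one_eq (by omega) (by omega) le_rfl)
      (ascCycle_apply_last (by omega) (by omega))
      (descCycle_apply_of_add_one_eq (by omega) rfl (by omega))
  · rw [commutatorElement_inv]
    exact commutatorElement_apply_of_eq (u := d - e₂) (v := d - e₂ + 1)
      (ascCycle_apply_of_lt (by omega))
      (descCycle_apply_of_add_one_eq (by omega) rfl (by omega))
      (ascCycle_apply_of_add_one_eq le_rfl rfl (by omega))
      (descCycle_apply_of_add_one_eq (by omega) rfl (by omega))
  · rw [descAscCycle_apply_of_lt_of_lt le_rfl (by omega) (by omega)]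
    omega

end Commutator

theorem stmt7_general (d e₁ e₂ e₃ : ℕ)
    (h12 : e₁ ≤ e₂) (h3d : e₃ ≤ d) (h2d : e₂ < d)
    (hsum : e₁ + e₂ + e₃ = 2 * d + 1)
    (g₁ g₂ g₃ : Equiv.Perm ℕ)
    (hg₁ : g₁ = (((List.range (d - e₃ + 1)).map (fun j => d - j)) ++
        (List.range (d - e₂)).map (· + 1)).formPerm)
    (hg₂ : g₂ = ((List.range e₂).map (fun j => d - e₂ + 1 + j)).formPerm)
    (hg₃ : g₃ = ((List.range e₃).map (fun j => e₃ - j)).formPerm) :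
    ⁅g₁, ⁅g₂, g₃⁆⁆ ≠ 1 ∧ ⁅g₁, ⁅g₂, g₃⁆⁆ e₃ ≠ e₃ := by
  have hgap : d - e₂ + 2 ≤ e₃ := by omega
  obtain rfl : g₁ = descAscCycle d e₃ (d - e₂) := hg₁
  obtain rfl : g₂ = ascCycle (d - e₂ + 1) e₂ := hg₂
  obtain rfl : g₃ = descCycle e₃ := hg₃
  have key : ⁅descAscCycle d e₃ (d - e₂), ⁅ascCycle (d - e₂ + 1) e₂, descCycle e₃⁆⁆ e₃ ≠ e₃ := by
    rcases h3d.lt_or_eq with hlt | rfl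
    · exact commutator_cycles_apply_ne_of_lt h2d hgap hlt
    · exact commutator_cycles_apply_ne_of_eq h2d hgap
  exact ⟨fun h => key (by rw [h]; rfl), key⟩

/-- Let `d ≥ 2` and `2 ≤ e₁ ≤ e₂ ≤ e₃ ≤ d` with `e₁ + e₂ + e₃ = 2d + 1` and
`e₂ < d`. With `g₁, g₂, g₃ ∈ S_d` the cycles `g₁ = (d, d−1, …, e₃, 1, 2, …, d−e₂)`,
`g₂ = (d−e₂+1, …, d)`, `g₃ = (e₃, e₃−1, …, 1)`, the iterated commutator
`[g₁, [g₂, g₃]]` is a nontrivial permutation; in particular it does not fix the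
point `e₃`. -/
theorem stmt7 (d e₁ e₂ e₃ : ℕ) (hd : 2 ≤ d)
    (h1 : 2 ≤ e₁) (h12 : e₁ ≤ e₂) (h23 : e₂ ≤ e₃) (h3d : e₃ ≤ d) (h2d : e₂ < d)
    (hsum : e₁ + e₂ + e₃ = 2 * d + 1)
    (g₁ g₂ g₃ : Equiv.Perm ℕ)
    (hg₁ : g₁ = (((List.range (d - e₃ + 1)).map (fun j => d - j)) ++
        (List.range (d - e₂)).map (· + 1)).formPerm)
    (hg₂ : g₂ = ((List.range e₂).map (fun j => d - e₂ + 1 + j)).formPerm)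
    (hg₃ : g₃ = ((List.range e₃).map (fun j => e₃ - j)).formPerm) :
    ⁅g₁, ⁅g₂, g₃⁆⁆ ≠ 1 ∧ ⁅g₁, ⁅g₂, g₃⁆⁆ e₃ ≠ e₃ :=
  stmt7_general d e₁ e₂ e₃ h12 h3d h2d hsum g₁ g₂ g₃ hg₁ hg₂ hg₃
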